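/- Under Assumption 2.2 and the condition σ/(4eβ) ≤ C₁ ≤ (1/2)·max{σ/β, 1/4}, the mesh step sizes of the mesh generated by φ are nondecreasing in the layer region: h_i ≤ h_{i+1} for every integer i with 0 ≤ i ≤ N/4 − 3, i.e. h₀ ≤ h₁ ≤ ⋯ ≤ h_{N/4−2}. -/
import Mathlib


/-- The Bakhvalov-type mesh generating function of Kopteva, with transition
parameter `ϑ = 1/4 - C₁ ε`. -/
noncomputable def phi (β σ ε C₁ : ℝ) (t : ℝ) : ℝ :=
  if t ≤ 1/4 - C₁ * ε then -(σ * ε / β) * Real.log (1 - 4 * t)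
  else if t < 1 - (1/4 - C₁ * ε) then
    ((1 + (σ * ε / β) * Real.log (4 * C₁ * ε)) / (1 - 2 * (1/4 - C₁ * ε)))
        * (t - (1/4 - C₁ * ε))
      + ((σ * ε / β) * Real.log (4 * C₁ * ε) / (1 - 2 * (1/4 - C₁ * ε)))
        * (t - (1 - (1/4 - C₁ * ε)))
  else 1 + (σ * ε / β) * Real.log (1 - 4 * (1 - t))

/-- Mesh points `x_i = φ(i/N)`. -/
noncomputable def meshXK (β σ ε C₁ : ℝ) (N i : ℕ) : ℝ := phi β σ ε C₁ ((i : ℝ) / (N : ℝ))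

/-- Mesh step sizes `h_i = x_{i+1} - x_i`. -/
noncomputable def meshHK (β σ ε C₁ : ℝ) (N i : ℕ) : ℝ :=
  meshXK β σ ε C₁ N (i + 1) - meshXK β σ ε C₁ N i

set_option maxHeartbeats 1000000 in
theorem stmt_14 (β σ ε C₁ : ℝ) (N : ℕ)
    (hβ : 0 < β) (hσ : 0 < σ) (hε0 : 0 < ε) (hε1 : ε < 1)
    (hN4 : 4 ∣ N) (hN : max 8 (2 * Real.log (σ / β)) ≤ (N : ℝ))
    (hεN : ε ≤ min (β / (4 * σ)) 1 * (N : ℝ)⁻¹)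
    (hC₁l : σ / (4 * Real.exp 1 * β) ≤ C₁)
    (hC₁u : C₁ ≤ 1 / 2 * max (σ / β) (1 / 4)) :
    ∀ i : ℕ, i + 3 ≤ N / 4 → meshHK β σ ε C₁ N i ≤ meshHK β σ ε C₁ N (i + 1) := by
  intro i hi
  have hN8 : (8:ℝ) ≤ N := le_trans (le_max_left _ _) hN
  have hN0 : (0:ℝ) < N := by linarith
  -- C₁ * ε ≤ 1/(8N)
  have hεnn : (0:ℝ) ≤ ε := hε0.le
  have hC1pos : (0:ℝ) < C₁ := lt_of_lt_of_le (by positivity) hC₁l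
  have hC1e : C₁ * ε ≤ 1 / (8 * N) := by
    rcases le_total (1/4 : ℝ) (σ / β) with h | h
    · have hmax : max (σ / β) (1/4 : ℝ) = σ / β := max_eq_left h
      have hmin : min (β / (4 * σ)) 1 ≤ β / (4 * σ) := min_le_left _ _
      have hε' : ε ≤ β / (4 * σ) * (N : ℝ)⁻¹ := le_trans hεN (by
        apply mul_le_mul_of_nonneg_right hmin (by positivity))
      have hC1' : C₁ ≤ 1 / 2 * (σ / β) := by rw [hmax] at hC₁u; exact hC₁u
      calc C₁ * ε ≤ (1 / 2 * (σ / β)) * (β / (4 * σ) * (N : ℝ)⁻¹) :=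
            mul_le_mul hC1' hε' hεnn (by positivity)
        _ = 1 / (8 * N) := by field_simp; ring
    · have hmax : max (σ / β) (1/4 : ℝ) = 1/4 := max_eq_right h
      have hmin : min (β / (4 * σ)) 1 ≤ 1 := min_le_right _ _
      have hε' : ε ≤ (N : ℝ)⁻¹ := le_trans hεN (by
        calc min (β / (4 * σ)) 1 * (N : ℝ)⁻¹ ≤ 1 * (N : ℝ)⁻¹ :=
              mul_le_mul_of_nonneg_right hmin (by positivity)
          _ = (N : ℝ)⁻¹ := one_mul _)
      have hC1' : C₁ ≤ 1 / 8 := by rw [hmax] at hC₁u; linarith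
      calc C₁ * ε ≤ (1 / 8) * (N : ℝ)⁻¹ := mul_le_mul hC1' hε' hεnn (by norm_num)
        _ = 1 / (8 * N) := by field_simp
  have h4 : 4 * i + 12 ≤ N := by
    obtain ⟨k, rfl⟩ := hN4
    omega
  have h4' : (4 * (i:ℝ) + 12) ≤ N := by exact_mod_cast h4
  have hC1eN : C₁ * ε * N ≤ 1/8 := by
    have := mul_le_mul_of_nonneg_right hC1e hN0.le
    have h8 : 1 / (8 * (N:ℝ)) * N = 1/8 := by field_simp
    linarith [h8 ▸ this]
  -- membership of points in layer region
  have key : ∀ j : ℝ, j ≤ (i:ℝ) + 2 → j / N ≤ 1/4 - C₁ * ε := by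
    intro j hj
    rw [div_le_iff₀ hN0]
    nlinarith
  -- positivity of the log arguments
  have ha : (0:ℝ) < 1 - 4 * ((i:ℝ) / N) := by
    rw [sub_pos, ← mul_div_assoc, div_lt_iff₀ hN0] ; nlinarith
  have hb : (0:ℝ) < 1 - 4 * (((i:ℝ)+1) / N) := by
    rw [sub_pos, ← mul_div_assoc, div_lt_iff₀ hN0] ; nlinarith
  have hc : (0:ℝ) < 1 - 4 * (((i:ℝ)+2) / N) := by
    rw [sub_pos, ← mul_div_assoc, div_lt_iff₀ hN0] ; nlinarith
  -- key log inequality: log a + log c ≤ 2 log b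
  have hac : (1 - 4 * ((i:ℝ) / N)) * (1 - 4 * (((i:ℝ)+2) / N))
      ≤ (1 - 4 * (((i:ℝ)+1) / N))^2 := by
    have e1 : ((i:ℝ)+1)/N = (i:ℝ)/N + 1/N := by ring
    have e2 : ((i:ℝ)+2)/N = (i:ℝ)/N + 2/N := by ring
    rw [e1, e2]
    have hid : (1 - 4 * ((i:ℝ)/N + 1/N))^2 - (1 - 4 * ((i:ℝ)/N)) * (1 - 4 * ((i:ℝ)/N + 2/N))
        = 16 * (1/(N:ℝ))^2 := by ring
    nlinarith [sq_nonneg (1/(N:ℝ))]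
  have hlog : Real.log (1 - 4 * ((i:ℝ) / N)) + Real.log (1 - 4 * (((i:ℝ)+2) / N))
      ≤ 2 * Real.log (1 - 4 * (((i:ℝ)+1) / N)) := by
    calc Real.log (1 - 4 * ((i:ℝ) / N)) + Real.log (1 - 4 * (((i:ℝ)+2) / N))
        = Real.log ((1 - 4 * ((i:ℝ) / N)) * (1 - 4 * (((i:ℝ)+2) / N))) :=
          (Real.log_mul ha.ne' hc.ne').symm
      _ ≤ Real.log ((1 - 4 * (((i:ℝ)+1) / N))^2) :=
          Real.log_le_log (by positivity) hac
      _ = 2 * Real.log (1 - 4 * (((i:ℝ)+1) / N)) := by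
          rw [Real.log_pow]; push_cast; ring
  have hk : (0:ℝ) ≤ σ * ε / β := by positivity
  simp only [meshHK, meshXK, phi]
  push_cast
  rw [if_pos (key ((i:ℝ)) (by linarith)), if_pos (key ((i:ℝ)+1) (by linarith)),
    if_pos (key ((i:ℝ)+1+1) (by linarith))]
  have e3 : ((i:ℝ)+1+1) = ((i:ℝ)+2) := by ring
  rw [e3]
  have h' := mul_le_mul_of_nonneg_left hlog hk
  have e4 : σ * ε / β * (Real.log (1 - 4 * ((i:ℝ) / N)) + Real.log (1 - 4 * (((i:ℝ)+2) / N)))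
      = σ * ε / β * Real.log (1 - 4 * ((i:ℝ) / N))
        + σ * ε / β * Real.log (1 - 4 * (((i:ℝ)+2) / N)) := by ring
  have e5 : σ * ε / β * (2 * Real.log (1 - 4 * (((i:ℝ)+1) / N)))
      = 2 * (σ * ε / β * Real.log (1 - 4 * (((i:ℝ)+1) / N))) := by ring
  linarith
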